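/- Let s ≥ 1 and let I ⊆ S_{s,n} = {\vec{i} ∈ N^n : |\vec{i}| < s} be an initial segment. Then the F_q-linear map eval_I : F_q[X]_I → F_q^{|I|} sending F to (E(F,\vec{j}))_{\vec{j}∈I} is injective (hence bijective). -/

import Mathlib

open MvPolynomial

noncomputable def mvHasseDeriv {σ R : Type*} [CommSemiring R] (s : σ →₀ ℕ)
    (F : MvPolynomial σ R) : MvPolynomial σ R :=
  MvPolynomial.coeff s
    (MvPolynomial.eval₂ (MvPolynomial.C.comp MvPolynomial.C)
      (fun i => MvPolynomial.C (MvPolynomial.X i) + MvPolynomial.X i) F)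

noncomputable def Nuni {F : Type*} [Field F] (α : ℕ → F) (q i : ℕ) : Polynomial F :=
  ∏ j ∈ Finset.range i, (Polynomial.X - Polynomial.C (α (j % q)))

noncomputable def Nvec {F : Type*} [Field F] (α : ℕ → F) (q : ℕ) {n : ℕ}
    (i : Fin n → ℕ) : MvPolynomial (Fin n) F :=
  ∏ ℓ, ∏ j ∈ Finset.range (i ℓ), (MvPolynomial.X ℓ - MvPolynomial.C (α (j % q)))

noncomputable def Eev {F : Type*} [Field F] (α : ℕ → F) (q : ℕ) {n : ℕ}
    (P : MvPolynomial (Fin n) F) (j : Fin n → ℕ) : F :=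
  MvPolynomial.eval (fun ℓ => α (j ℓ % q))
    (mvHasseDeriv (Finsupp.equivFunOnFinite.symm fun ℓ => j ℓ / q) P)

noncomputable def Euni {F : Type*} [Field F] (α : ℕ → F) (q : ℕ)
    (P : Polynomial F) (j : ℕ) : F :=
  (Polynomial.hasseDeriv (j / q) P).eval (α (j % q))

def Cset (q s m : ℕ) : Finset (Fin m → ℕ) :=
  (Fintype.piFinset fun _ => Finset.range (s * q)).filter fun v => (∑ ℓ, v ℓ / q) < s

def Rset (q : ℕ) (d : ℤ) (s m : ℕ) : Finset (Fin m → ℕ) :=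
  (Cset q s m).filter fun v => d < ∑ ℓ, (v ℓ : ℤ)

def Δfun (q : ℕ) (d' s' : ℤ) : ℤ := (s' - max ((d' + 1).fdiv (q : ℤ)) 0) * (q : ℤ)

def supportedOn (F : Type*) [Field F] {n : ℕ} (I : Set (Fin n → ℕ)) :
    Submodule F (MvPolynomial (Fin n) F) where
  carrier := {P | ∀ m ∈ P.support, ⇑m ∈ I}
  zero_mem' := by simp
  add_mem' := by
    intro a b ha hb m hm
    rcases Finset.mem_union.mp (MvPolynomial.support_add hm) with h | h
    · exact ha m h
    · exact hb m h
  smul_mem' := by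
    intro c a ha m hm
    exact ha m (MvPolynomial.support_smul hm)

/-! ### Auxiliary lemmas -/

section Aux

open Polynomial in
lemma coeff_prod_aeval_aux {F : Type*} [Field F] {n : ℕ} (p : Fin n → Polynomial F)
    (S : Finset (Fin n)) (s : Fin n →₀ ℕ) :
    MvPolynomial.coeff s (∏ ℓ ∈ S, Polynomial.aeval (MvPolynomial.X ℓ : MvPolynomial (Fin n) F) (p ℓ)) =
      if s.support ⊆ S then ∏ ℓ ∈ S, (p ℓ).coeff (s ℓ) else 0 := by
  classical
  induction S using Finset.cons_induction generalizing s with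
  | empty =>
    simp only [Finset.prod_empty, MvPolynomial.coeff_one, Finset.subset_empty,
      Finsupp.support_eq_empty]
    by_cases h : s = 0 <;> simp [h, eq_comm]
  | cons a S ha IH =>
    rw [Finset.prod_cons, Polynomial.aeval_eq_sum_range, Finset.sum_mul,
      MvPolynomial.coeff_sum]
    have hterm : ∀ k, MvPolynomial.coeff s
        (((p a).coeff k • (MvPolynomial.X a : MvPolynomial (Fin n) F) ^ k) *
          ∏ ℓ ∈ S, Polynomial.aeval (MvPolynomial.X ℓ : MvPolynomial (Fin n) F) (p ℓ))
        = if Finsupp.single a k ≤ s then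
            (p a).coeff k * (if (s - Finsupp.single a k).support ⊆ S then
              ∏ ℓ ∈ S, (p ℓ).coeff ((s - Finsupp.single a k) ℓ) else 0) else 0 := by
      intro k
      rw [MvPolynomial.smul_eq_C_mul, MvPolynomial.C_mul_X_pow_eq_monomial,
        MvPolynomial.coeff_monomial_mul', IH]
    simp only [hterm]
    rw [Finset.sum_eq_single (s a)]
    · have h1 : Finsupp.single a (s a) ≤ s := Finsupp.single_le_iff.mpr le_rfl
      rw [if_pos h1]
      have hsupp : (s - Finsupp.single a (s a)).support = s.support.erase a := by
        ext x
        by_cases h : x = a <;>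
          simp [Finsupp.mem_support_iff, Finsupp.tsub_apply, Finsupp.single_apply, h, Ne.symm]
      have hiff : ((s - Finsupp.single a (s a)).support ⊆ S) ↔ (s.support ⊆ Finset.cons a S ha) := by
        rw [hsupp, Finset.cons_eq_insert, ← Finset.subset_insert_iff]
      have hprod : ∏ ℓ ∈ S, (p ℓ).coeff ((s - Finsupp.single a (s a)) ℓ)
          = ∏ ℓ ∈ S, (p ℓ).coeff (s ℓ) := by
        apply Finset.prod_congr rfl
        intro x hx
        have hxa : x ≠ a := fun h => ha (h ▸ hx)
        simp [Finsupp.tsub_apply, Finsupp.single_apply, Ne.symm hxa]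
      rw [hprod] at *
      by_cases h : s.support ⊆ Finset.cons a S ha
      · rw [if_pos (hiff.mpr h), if_pos h, Finset.prod_cons]
      · rw [if_neg (fun hc => h (hiff.mp hc)), if_neg h, mul_zero]
    · intro b _ hb
      by_cases hle : Finsupp.single a b ≤ s
      · rw [if_pos hle]
        have hlt : b < s a := lt_of_le_of_ne (Finsupp.single_le_iff.mp hle) hb
        have hmem : a ∈ (s - Finsupp.single a b).support := by
          simp [Finsupp.mem_support_iff, Finsupp.tsub_apply]
          omega
        rw [if_neg (fun hc => ha (hc hmem)), mul_zero]
      · exact if_neg hle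
    · intro hnot
      have : (p a).coeff (s a) = 0 :=
        Polynomial.coeff_eq_zero_of_natDegree_lt (by
          simpa [Nat.lt_succ_iff, not_le] using (fun h => hnot (Finset.mem_range.mpr h)) :
            (p a).natDegree < s a)
      simp [this]

lemma coeff_prod_aeval {F : Type*} [Field F] {n : ℕ} (p : Fin n → Polynomial F)
    (s : Fin n →₀ ℕ) :
    MvPolynomial.coeff s (∏ ℓ, Polynomial.aeval (MvPolynomial.X ℓ : MvPolynomial (Fin n) F) (p ℓ)) =
      ∏ ℓ, (p ℓ).coeff (s ℓ) := by
  rw [coeff_prod_aeval_aux, if_pos (Finset.subset_univ _)]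

lemma taylor_Nuni {F : Type*} [Field F] (α : ℕ → F) (q a : ℕ) (c : F) :
    Polynomial.taylor c (Nuni α q a)
      = ∏ j ∈ Finset.range a, (Polynomial.X + Polynomial.C (c - α (j % q))) := by
  rw [Nuni, Polynomial.taylor_apply, Polynomial.prod_comp]
  refine Finset.prod_congr rfl fun j _ => ?_
  rw [Polynomial.sub_comp, Polynomial.X_comp, Polynomial.C_comp, Polynomial.C_sub]
  ring

lemma filter_mod_image {q : ℕ} (a b : ℕ) (hb : b < a) :
    Finset.image (fun t => b % q + t * q) (Finset.range (b / q + 1)) ⊆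
      (Finset.range a).filter (fun j => j % q = b % q) := by
  intro j hj
  simp only [Finset.mem_image, Finset.mem_range] at hj
  obtain ⟨t, ht, rfl⟩ := hj
  have h1 : b % q + t * q ≤ b % q + (b / q) * q := by
    have : t ≤ b / q := by omega
    exact Nat.add_le_add_left (Nat.mul_le_mul_right q this) _
  have h2 : b % q + b / q * q = b := by
    rw [Nat.mod_add_div']
  simp only [Finset.mem_filter, Finset.mem_range]
  constructor
  · omega
  · rw [Nat.add_mul_mod_self_right, Nat.mod_mod_of_dvd]
    exact dvd_refl q

lemma card_filter_mod_ge {q : ℕ} (hq : 1 ≤ q) {a b : ℕ} (hb : b < a) :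
    b / q + 1 ≤ ((Finset.range a).filter (fun j => j % q = b % q)).card := by
  calc b / q + 1 = (Finset.range (b / q + 1)).card := by simp
    _ = (Finset.image (fun t => b % q + t * q) (Finset.range (b / q + 1))).card := by
        rw [Finset.card_image_of_injective]
        intro x y hxy
        simp only at hxy
        have hx : x * q = y * q := by omega
        exact Nat.eq_of_mul_eq_mul_right (by omega) hx
    _ ≤ _ := Finset.card_le_card (filter_mod_image a b hb)

lemma card_filter_mod_eq {q : ℕ} (hq : 1 ≤ q) (a : ℕ) :
    ((Finset.range a).filter (fun j => j % q = a % q)).card = a / q := by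
  have : (Finset.range a).filter (fun j => j % q = a % q)
      = Finset.image (fun t => a % q + t * q) (Finset.range (a / q)) := by
    ext j
    simp only [Finset.mem_filter, Finset.mem_range, Finset.mem_image]
    constructor
    · rintro ⟨hja, hjm⟩
      refine ⟨j / q, ?_, ?_⟩
      · have h1 := Nat.mod_add_div j q
        have h2 := Nat.mod_add_div a q
        rcases Nat.lt_or_ge (j / q) (a / q) with h | h
        · exact h
        · exfalso; nlinarith [Nat.mul_le_mul_left q h]
      · rw [← hjm, Nat.mod_add_div']
    · rintro ⟨t, ht, rfl⟩
      have h2 : a % q + a / q * q = a := Nat.mod_add_div' a q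
      constructor
      · have : t * q + q ≤ a / q * q := by
          calc t * q + q = (t+1) * q := by ring
          _ ≤ a / q * q := Nat.mul_le_mul_right q (by omega)
        omega
      · rw [Nat.add_mul_mod_self_right, Nat.mod_mod_of_dvd]
        exact dvd_refl q
  rw [this, Finset.card_image_of_injective, Finset.card_range]
  intro x y hxy
  simp only at hxy
  have hx : x * q = y * q := by omega
  exact Nat.eq_of_mul_eq_mul_right (by omega) hx

lemma Euni_eq_taylor_coeff {F : Type*} [Field F] (α : ℕ → F) (q : ℕ) (P : Polynomial F) (j : ℕ) :
    Euni α q P j = (Polynomial.taylor (α (j % q)) P).coeff (j / q) :=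
  (Polynomial.taylor_coeff _ _ _).symm

lemma taylor_Nuni_split {F : Type*} [Field F] (α : ℕ → F) (q a b : ℕ) :
    Polynomial.taylor (α (b % q)) (Nuni α q a) =
      (∏ j ∈ (Finset.range a).filter (fun j => ¬ j % q = b % q),
        (Polynomial.X + Polynomial.C (α (b % q) - α (j % q)))) *
      Polynomial.X ^ ((Finset.range a).filter (fun j => j % q = b % q)).card := by
  classical
  rw [taylor_Nuni,
    ← Finset.prod_filter_mul_prod_filter_not (Finset.range a) (fun j => j % q = b % q)]
  rw [mul_comm]
  congr 1
  rw [← Finset.prod_const]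
  refine Finset.prod_congr rfl fun j hj => ?_
  have : j % q = b % q := (Finset.mem_filter.mp hj).2
  rw [this]
  simp

lemma Euni_Nuni_eq_zero {F : Type*} [Field F] (α : ℕ → F) {q : ℕ} (hq : 1 ≤ q)
    {a b : ℕ} (hb : b < a) : Euni α q (Nuni α q a) b = 0 := by
  classical
  rw [Euni_eq_taylor_coeff, taylor_Nuni_split, Polynomial.coeff_mul_X_pow']
  rw [if_neg]
  have := card_filter_mod_ge hq hb
  omega

lemma Euni_Nuni_ne_zero {F : Type*} [Field F] (α : ℕ → F) {q : ℕ} (hq : 1 ≤ q)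
    (hinj : ∀ a < q, ∀ b < q, α a = α b → a = b) (a : ℕ) :
    Euni α q (Nuni α q a) a ≠ 0 := by
  classical
  rw [Euni_eq_taylor_coeff, taylor_Nuni_split, Polynomial.coeff_mul_X_pow',
    card_filter_mod_eq hq, if_pos le_rfl, Nat.sub_self, Polynomial.coeff_zero_eq_eval_zero,
    Polynomial.eval_prod]
  apply Finset.prod_ne_zero_iff.mpr
  intro j hj
  have hjm : ¬ j % q = a % q := (Finset.mem_filter.mp hj).2
  simp only [Polynomial.eval_add, Polynomial.eval_X, Polynomial.eval_C, zero_add]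
  intro hc
  exact hjm (hinj _ (Nat.mod_lt _ (by omega)) _ (Nat.mod_lt _ (by omega))
    (sub_eq_zero.mp hc).symm)

lemma Eev_eq_coeff_aeval {F : Type*} [Field F] (α : ℕ → F) (q : ℕ) {n : ℕ}
    (P : MvPolynomial (Fin n) F) (j : Fin n → ℕ) :
    Eev α q P j = MvPolynomial.coeff (Finsupp.equivFunOnFinite.symm fun ℓ => j ℓ / q)
      (MvPolynomial.aeval (fun ℓ => MvPolynomial.C (α (j ℓ % q)) + MvPolynomial.X ℓ) P) := by
  rw [Eev, mvHasseDeriv, ← MvPolynomial.coeff_map, MvPolynomial.eval₂_comp_left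
    (MvPolynomial.map (MvPolynomial.eval fun ℓ => α (j ℓ % q)))]
  congr 1
  rw [MvPolynomial.aeval_def, MvPolynomial.algebraMap_eq]
  congr 1
  · ext r
    simp
  · funext ℓ
    simp

lemma Eev_add {F : Type*} [Field F] (α : ℕ → F) (q : ℕ) {n : ℕ}
    (P Q : MvPolynomial (Fin n) F) (j : Fin n → ℕ) :
    Eev α q (P + Q) j = Eev α q P j + Eev α q Q j := by
  simp [Eev_eq_coeff_aeval, map_add, MvPolynomial.coeff_add]

lemma Eev_smul {F : Type*} [Field F] (α : ℕ → F) (q : ℕ) {n : ℕ}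
    (c : F) (P : MvPolynomial (Fin n) F) (j : Fin n → ℕ) :
    Eev α q (c • P) j = c * Eev α q P j := by
  simp [Eev_eq_coeff_aeval, map_smul, MvPolynomial.coeff_smul, smul_eq_mul]

noncomputable def EevLM {F : Type*} [Field F] (α : ℕ → F) (q : ℕ) {n : ℕ}
    (j : Fin n → ℕ) : MvPolynomial (Fin n) F →ₗ[F] F where
  toFun P := Eev α q P j
  map_add' P Q := Eev_add α q P Q j
  map_smul' c P := Eev_smul α q c P j

lemma Eev_sub {F : Type*} [Field F] (α : ℕ → F) (q : ℕ) {n : ℕ}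
    (P Q : MvPolynomial (Fin n) F) (j : Fin n → ℕ) :
    Eev α q (P - Q) j = Eev α q P j - Eev α q Q j :=
  map_sub (EevLM α q j) P Q

lemma Eev_sum {F : Type*} [Field F] (α : ℕ → F) (q : ℕ) {n : ℕ} {ι : Type*}
    (S : Finset ι) (f : ι → MvPolynomial (Fin n) F) (j : Fin n → ℕ) :
    Eev α q (∑ i ∈ S, f i) j = ∑ i ∈ S, Eev α q (f i) j :=
  map_sum (EevLM α q j) f S

lemma Nvec_eq_prod_aeval {F : Type*} [Field F] (α : ℕ → F) (q : ℕ) {n : ℕ} (i : Fin n → ℕ) :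
    Nvec α q i = ∏ ℓ, Polynomial.aeval (MvPolynomial.X ℓ : MvPolynomial (Fin n) F) (Nuni α q (i ℓ)) := by
  rw [Nvec]
  refine Finset.prod_congr rfl fun ℓ _ => ?_
  rw [Nuni, map_prod]
  refine Finset.prod_congr rfl fun k _ => ?_
  simp [MvPolynomial.algebraMap_eq]

lemma coeff_Nvec {F : Type*} [Field F] (α : ℕ → F) (q : ℕ) {n : ℕ} (i : Fin n → ℕ)
    (s : Fin n →₀ ℕ) :
    MvPolynomial.coeff s (Nvec α q i) = ∏ ℓ, (Nuni α q (i ℓ)).coeff (s ℓ) := by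
  rw [Nvec_eq_prod_aeval, coeff_prod_aeval]

lemma Nuni_natDegree {F : Type*} [Field F] (α : ℕ → F) (q a : ℕ) :
    (Nuni α q a).natDegree = a := by
  rw [Nuni, Polynomial.natDegree_prod]
  · simp
  · intro k _
    exact Polynomial.X_sub_C_ne_zero _

lemma Nuni_coeff_self {F : Type*} [Field F] (α : ℕ → F) (q a : ℕ) :
    (Nuni α q a).coeff a = 1 := by
  have hm : (Nuni α q a).Monic :=
    Polynomial.monic_prod_of_monic _ _ fun k _ => Polynomial.monic_X_sub_C _
  have := hm.coeff_natDegree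
  rwa [Nuni_natDegree] at this

lemma Eev_Nvec {F : Type*} [Field F] (α : ℕ → F) (q : ℕ) {n : ℕ} (i j : Fin n → ℕ) :
    Eev α q (Nvec α q i) j = ∏ ℓ, Euni α q (Nuni α q (i ℓ)) (j ℓ) := by
  rw [Eev_eq_coeff_aeval]
  have key : MvPolynomial.aeval (fun ℓ => MvPolynomial.C (α (j ℓ % q)) + MvPolynomial.X ℓ) (Nvec α q i)
      = ∏ ℓ, Polynomial.aeval (MvPolynomial.X ℓ : MvPolynomial (Fin n) F)
          (Polynomial.taylor (α (j ℓ % q)) (Nuni α q (i ℓ))) := by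
    rw [Nvec, map_prod]
    refine Finset.prod_congr rfl fun ℓ _ => ?_
    rw [taylor_Nuni, map_prod, map_prod]
    refine Finset.prod_congr rfl fun k _ => ?_
    simp only [map_sub, map_add, MvPolynomial.aeval_X, MvPolynomial.aeval_C,
      Polynomial.aeval_X, Polynomial.aeval_C, MvPolynomial.algebraMap_eq,
      MvPolynomial.C_sub]
    ring
  rw [key, coeff_prod_aeval]
  refine Finset.prod_congr rfl fun ℓ _ => ?_
  rw [Euni_eq_taylor_coeff]
  congr 1

lemma mem_support_Nvec_le {F : Type*} [Field F] (α : ℕ → F) (q : ℕ) {n : ℕ}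
    {i : Fin n → ℕ} {mo : Fin n →₀ ℕ} (h : mo ∈ (Nvec α q i).support) :
    ∀ ℓ, mo ℓ ≤ i ℓ := by
  intro ℓ
  by_contra hlt
  apply MvPolynomial.mem_support_iff.mp h
  rw [coeff_Nvec]
  apply Finset.prod_eq_zero (Finset.mem_univ ℓ)
  apply Polynomial.coeff_eq_zero_of_natDegree_lt
  rw [Nuni_natDegree]
  omega

lemma enc_lt_enc {n s : ℕ} (hs : 1 ≤ s) {v w : Fin n → ℕ} (hle : v ≤ w) (hne : v ≠ w) :
    (∑ ℓ, v ℓ * s ^ (ℓ : ℕ)) < ∑ ℓ, w ℓ * s ^ (ℓ : ℕ) := by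
  obtain ⟨ℓ₀, hℓ⟩ : ∃ ℓ, v ℓ ≠ w ℓ := by
    by_contra h
    push_neg at h
    exact hne (funext h)
  refine Finset.sum_lt_sum (fun i _ => Nat.mul_le_mul_right _ (hle i))
    ⟨ℓ₀, Finset.mem_univ _, ?_⟩
  exact (Nat.mul_lt_mul_right (Nat.pow_pos hs)).mpr (lt_of_le_of_ne (hle ℓ₀) hℓ)

lemma enc_inj {n s : ℕ} {v w : Fin n → ℕ} (hv : ∀ ℓ, v ℓ < s) (hw : ∀ ℓ, w ℓ < s)
    (h : (∑ ℓ, v ℓ * s ^ (ℓ : ℕ)) = ∑ ℓ, w ℓ * s ^ (ℓ : ℕ)) : v = w := by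
  have hfg : (fun ℓ => (⟨v ℓ, hv ℓ⟩ : Fin s)) = fun ℓ => (⟨w ℓ, hw ℓ⟩ : Fin s) := by
    apply finFunctionFinEquiv.injective
    apply Fin.ext
    rw [finFunctionFinEquiv_apply, finFunctionFinEquiv_apply]
    exact h
  funext ℓ
  exact congrArg Fin.val (congrFun hfg ℓ)

lemma sum_two_pow_range (n : ℕ) : (∑ i ∈ Finset.range n, 2 ^ i) = 2 ^ n - 1 := by
  induction n with
  | zero => simp
  | succ n IH =>
    rw [Finset.sum_range_succ, IH]
    have : 1 ≤ 2 ^ n := Nat.one_le_two_pow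
    rw [pow_succ]
    omega

end Aux

lemma span_aux {F : Type*} [Field F] (α : ℕ → F) (q : ℕ) {n : ℕ} (s : ℕ) (hs : 1 ≤ s)
    (I : Finset (Fin n → ℕ))
    (hdc : ∀ i j : Fin n → ℕ, i ≤ j → j ∈ I → i ∈ I)
    (hI : ∀ i ∈ I, (∑ ℓ, i ℓ) < s) :
    ∀ N : ℕ, ∀ R : MvPolynomial (Fin n) F, (∀ mo ∈ R.support, ⇑mo ∈ I) →
      (∑ mo ∈ R.support, 2 ^ (∑ ℓ, mo ℓ * s ^ (ℓ : ℕ))) ≤ N →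
      ∃ c : (Fin n → ℕ) → F, R = ∑ i ∈ I, c i • Nvec α q i := by
  classical
  intro N
  induction N with
  | zero =>
    intro R hsup hμ
    have hempty : R.support = ∅ := by
      by_contra h
      obtain ⟨m, hm⟩ := Finset.nonempty_iff_ne_empty.mpr h
      have h1 : 1 ≤ 2 ^ (∑ ℓ, m ℓ * s ^ (ℓ : ℕ)) := Nat.one_le_two_pow
      have h2 : 2 ^ (∑ ℓ, m ℓ * s ^ (ℓ : ℕ))
          ≤ ∑ mo ∈ R.support, 2 ^ (∑ ℓ, mo ℓ * s ^ (ℓ : ℕ)) :=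
        Finset.single_le_sum (f := fun mo : Fin n →₀ ℕ => 2 ^ (∑ ℓ, mo ℓ * s ^ (ℓ : ℕ)))
          (fun _ _ => Nat.zero_le _) hm
      omega
    exact ⟨0, by simp [MvPolynomial.support_eq_empty.mp hempty]⟩
  | succ N IH =>
    intro R hsup hμ
    by_cases hR0 : R = 0
    · exact ⟨0, by simp [hR0]⟩
    obtain ⟨m, hm, hmax⟩ := Finset.exists_max_image R.support
      (fun mo => ∑ ℓ, mo ℓ * s ^ (ℓ : ℕ)) (MvPolynomial.support_nonempty.mpr hR0)
    have hmI : ⇑m ∈ I := hsup m hm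
    have hms : ∀ ℓ, m ℓ < s := by
      intro ℓ
      have h1 : m ℓ ≤ ∑ ℓ', m ℓ' :=
        Finset.single_le_sum (fun _ _ => Nat.zero_le _) (Finset.mem_univ ℓ)
      have h2 := hI _ hmI
      omega
    set r := MvPolynomial.coeff m R with hr
    set R' := R - r • Nvec α q ⇑m with hR'
    have hcoefN : MvPolynomial.coeff m (Nvec α q ⇑m) = 1 := by
      rw [coeff_Nvec]
      exact Finset.prod_eq_one fun ℓ _ => Nuni_coeff_self α q (m ℓ)
    have hm' : m ∉ R'.support := by
      simp [hR', MvPolynomial.coeff_sub, MvPolynomial.coeff_smul, hcoefN,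
        MvPolynomial.mem_support_iff, ← hr]
    have hsub : R'.support ⊆ R.support.erase m ∪ (Nvec α q ⇑m).support.erase m := by
      intro mo hmo
      have hne : mo ≠ m := fun h => hm' (h ▸ hmo)
      have h0 : MvPolynomial.coeff mo R' ≠ 0 := MvPolynomial.mem_support_iff.mp hmo
      rw [hR', MvPolynomial.coeff_sub, MvPolynomial.coeff_smul] at h0
      by_cases h1 : MvPolynomial.coeff mo R = 0
      · have h2 : MvPolynomial.coeff mo (Nvec α q ⇑m) ≠ 0 := by
          intro h2
          apply h0
          rw [h1, h2, smul_zero, sub_zero]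
        exact Finset.mem_union_right _
          (Finset.mem_erase.mpr ⟨hne, MvPolynomial.mem_support_iff.mpr h2⟩)
      · exact Finset.mem_union_left _
          (Finset.mem_erase.mpr ⟨hne, MvPolynomial.mem_support_iff.mpr h1⟩)
    have hsup' : ∀ mo ∈ R'.support, ⇑mo ∈ I := by
      intro mo hmo
      rcases Finset.mem_union.mp (hsub hmo) with h | h
      · exact hsup mo (Finset.mem_of_mem_erase h)
      · exact hdc _ _ (mem_support_Nvec_le α q (Finset.mem_of_mem_erase h)) hmI
    have hA : (∑ mo ∈ R.support.erase m, 2 ^ (∑ ℓ, mo ℓ * s ^ (ℓ : ℕ)))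
          + 2 ^ (∑ ℓ, m ℓ * s ^ (ℓ : ℕ))
        = ∑ mo ∈ R.support, 2 ^ (∑ ℓ, mo ℓ * s ^ (ℓ : ℕ)) :=
      Finset.sum_erase_add _ _ hm
    have hB : (∑ mo ∈ (Nvec α q ⇑m).support.erase m, 2 ^ (∑ ℓ, mo ℓ * s ^ (ℓ : ℕ)))
        ≤ 2 ^ (∑ ℓ, m ℓ * s ^ (ℓ : ℕ)) - 1 := by
      set B := (Nvec α q ⇑m).support.erase m with hBdef
      have hBle : ∀ mo ∈ B, ∀ ℓ, mo ℓ ≤ m ℓ := fun mo hmo =>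
        mem_support_Nvec_le α q (Finset.mem_of_mem_erase hmo)
      have hBlt : ∀ mo ∈ B, (∑ ℓ, mo ℓ * s ^ (ℓ : ℕ)) < ∑ ℓ, m ℓ * s ^ (ℓ : ℕ) := by
        intro mo hmo
        have hne : (⇑mo : Fin n → ℕ) ≠ ⇑m :=
          fun h => (Finset.mem_erase.mp hmo).1 (DFunLike.coe_injective h)
        exact enc_lt_enc hs (hBle mo hmo) hne
      have hinjB : ∀ x ∈ B, ∀ y ∈ B,
          (∑ ℓ, x ℓ * s ^ (ℓ : ℕ)) = (∑ ℓ, y ℓ * s ^ (ℓ : ℕ)) → x = y := by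
        intro x hx y hy hxy
        have hxs : ∀ ℓ, (x : Fin n → ℕ) ℓ < s := fun ℓ => lt_of_le_of_lt (hBle x hx ℓ) (hms ℓ)
        have hys : ∀ ℓ, (y : Fin n → ℕ) ℓ < s := fun ℓ => lt_of_le_of_lt (hBle y hy ℓ) (hms ℓ)
        exact DFunLike.coe_injective (enc_inj hxs hys hxy)
      calc (∑ mo ∈ B, 2 ^ (∑ ℓ, mo ℓ * s ^ (ℓ : ℕ)))
          = ∑ e ∈ B.image (fun mo : Fin n →₀ ℕ => ∑ ℓ, mo ℓ * s ^ (ℓ : ℕ)), 2 ^ e :=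
            (Finset.sum_image hinjB).symm
        _ ≤ ∑ e ∈ Finset.range (∑ ℓ, m ℓ * s ^ (ℓ : ℕ)), 2 ^ e := by
            apply Finset.sum_le_sum_of_subset
            intro e he
            obtain ⟨mo, hmo, rfl⟩ := Finset.mem_image.mp he
            exact Finset.mem_range.mpr (hBlt mo hmo)
        _ = 2 ^ (∑ ℓ, m ℓ * s ^ (ℓ : ℕ)) - 1 := sum_two_pow_range _
    have hμ' : (∑ mo ∈ R'.support, 2 ^ (∑ ℓ, mo ℓ * s ^ (ℓ : ℕ))) ≤ N := by
      have h1 : (∑ mo ∈ R'.support, 2 ^ (∑ ℓ, mo ℓ * s ^ (ℓ : ℕ)))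
          ≤ ∑ mo ∈ R.support.erase m ∪ (Nvec α q ⇑m).support.erase m,
              2 ^ (∑ ℓ, mo ℓ * s ^ (ℓ : ℕ)) :=
        Finset.sum_le_sum_of_subset hsub
      have h2 := Finset.sum_union_inter (s₁ := R.support.erase m)
        (s₂ := (Nvec α q ⇑m).support.erase m)
        (f := fun mo => 2 ^ (∑ ℓ, mo ℓ * s ^ (ℓ : ℕ)))
      have h3 : 1 ≤ 2 ^ (∑ ℓ, m ℓ * s ^ (ℓ : ℕ)) := Nat.one_le_two_pow
      omega
    obtain ⟨c', hc'⟩ := IH R' hsup' hμ'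
    refine ⟨fun i => c' i + if i = ⇑m then r else 0, ?_⟩
    have hsplit : ∑ i ∈ I, (c' i + if i = ⇑m then r else 0) • Nvec α q i
        = (∑ i ∈ I, c' i • Nvec α q i) + ∑ i ∈ I, (if i = ⇑m then r • Nvec α q i else 0) := by
      rw [← Finset.sum_add_distrib]
      refine Finset.sum_congr rfl fun i _ => ?_
      rw [add_smul, ite_smul, zero_smul]
    rw [hsplit, ← hc', Finset.sum_ite_eq' I (⇑m) (fun i => r • Nvec α q i), if_pos hmI, hR']
    rw [sub_add_cancel]

theorem stmt6 {F : Type*} [Field F] [Fintype F] (q : ℕ) (hq : Fintype.card F = q)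
    (α : ℕ → F) (hinj : ∀ a < q, ∀ b < q, α a = α b → a = b)
    {n : ℕ} (s : ℕ) (hs : 1 ≤ s) (I : Finset (Fin n → ℕ)) (hne : I.Nonempty)
    (hdc : ∀ i j : Fin n → ℕ, i ≤ j → j ∈ I → i ∈ I)
    (hI : ∀ i ∈ I, (∑ ℓ, i ℓ) < s) :
    ∀ P Q : MvPolynomial (Fin n) F,
      (∀ mo ∈ P.support, ⇑mo ∈ I) → (∀ mo ∈ Q.support, ⇑mo ∈ I) →
      (∀ j ∈ I, Eev α q P j = Eev α q Q j) → P = Q := by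
  classical
  intro P Q hP hQ hE
  have hq1 : 1 ≤ q := by rw [← hq]; exact Fintype.card_pos
  set R := P - Q with hRdef
  have hsupR : ∀ mo ∈ R.support, ⇑mo ∈ I := by
    intro mo hmo
    rcases Finset.mem_union.mp (MvPolynomial.support_sub _ _ _ hmo) with h | h
    · exact hP mo h
    · exact hQ mo h
  have hER : ∀ j ∈ I, Eev α q R j = 0 := by
    intro j hj
    rw [hRdef, Eev_sub, hE j hj, sub_self]
  obtain ⟨c, hc⟩ := span_aux α q s hs I hdc hI _ R hsupR le_rfl
  have hR0 : R = 0 := by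
    set T := I.filter (fun i => c i ≠ 0) with hT
    rcases Finset.eq_empty_or_nonempty T with hTe | hTne
    · rw [hc]
      apply Finset.sum_eq_zero
      intro i hi
      have hci : c i = 0 := by
        by_contra h
        have : i ∈ T := Finset.mem_filter.mpr ⟨hi, h⟩
        rw [hTe] at this
        exact absurd this (Finset.notMem_empty i)
      rw [hci, zero_smul]
    · exfalso
      obtain ⟨i₀, hi₀T, hmin⟩ := Finset.exists_min_image T
        (fun i => ∑ ℓ, i ℓ * s ^ (ℓ : ℕ)) hTne
      obtain ⟨hi₀I, hci₀⟩ := Finset.mem_filter.mp hi₀T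
      have h0 := hER i₀ hi₀I
      rw [hc, Eev_sum] at h0
      have hsingle : ∑ i ∈ I, Eev α q (c i • Nvec α q i) i₀
          = c i₀ * Eev α q (Nvec α q i₀) i₀ := by
        rw [Finset.sum_eq_single i₀]
        · rw [Eev_smul]
        · intro i hiI hne'
          rw [Eev_smul]
          by_cases hci : c i = 0
          · rw [hci, zero_mul]
          · have hiT : i ∈ T := Finset.mem_filter.mpr ⟨hiI, hci⟩
            have hnle : ¬ i ≤ i₀ := by
              intro hle
              have h1 := enc_lt_enc hs hle hne'
              have h2 := hmin i hiT
              omega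
            obtain ⟨ℓ, hℓ⟩ : ∃ ℓ, i₀ ℓ < i ℓ := by
              by_contra h
              push_neg at h
              exact hnle (fun ℓ => h ℓ)
            rw [Eev_Nvec, Finset.prod_eq_zero (Finset.mem_univ ℓ)
              (Euni_Nuni_eq_zero α hq1 hℓ), mul_zero]
        · intro h
          exact absurd hi₀I h
      rw [hsingle] at h0
      rcases mul_eq_zero.mp h0 with h | h
      · exact hci₀ h
      · rw [Eev_Nvec] at h
        exact (Finset.prod_ne_zero_iff.mpr
          (fun ℓ _ => Euni_Nuni_ne_zero α hq1 hinj (i₀ ℓ))) h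
  exact sub_eq_zero.mp hR0
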